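/- arXiv:2007.03455 — 9 statements merged into one kernel-verified Lean document; each statement's English description precedes it below -/
import Mathlib

section
/- Let G = (V,E) be a finite simple graph and F₁, F₂ ⊆ V two distinct vertex subsets with |F₁ ∩ F₂| < κ(G) and V ≠ F₁ ∪ F₂. Then there exists an edge of G with one endpoint in the symmetric difference F₁ △ F₂ and the other endpoint in V − (F₁ ∪ F₂). -/
open SimpleGraph Finset

variable {V : Type*}

/-- The vertex connectivity of a finite simple graph: the minimum size of a vertex set
whose removal leaves a graph that is disconnected or has at most one vertex. -/
noncomputable def vConn [Fintype V] (G : SimpleGraph V) : ℕ :=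
  sInf {n | ∃ S : Finset V, S.card = n ∧
    (((↑S : Set V)ᶜ).Subsingleton ∨ ¬ (G.induce ((↑S : Set V)ᶜ)).Connected)}

lemma walk_cross {W : Type*} {H : SimpleGraph W} {P : W → Prop} {a b : W}
    (w : H.Walk a b) (ha : P a) (hb : ¬ P b) :
    ∃ u v, H.Adj u v ∧ P u ∧ ¬ P v := by
  classical
  induction w with
  | nil => exact absurd ha hb
  | @cons x y z h p ih =>
    by_cases hc : P y
    · exact ih hc hb
    · exact ⟨x, y, h, ha, hc⟩

/-- If $|F_1 ∩ F_2| < κ(G)$ and $F_1 ∪ F_2 ≠ V$, there is an edge from the symmetric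
difference $F_1 △ F_2$ to $V - (F_1 ∪ F_2)$. -/
theorem edge_from_symmDiff [Fintype V] [DecidableEq V] (G : SimpleGraph V)
    (F1 F2 : Finset V) (hne : F1 ≠ F2) (hcap : (F1 ∩ F2).card < vConn G)
    (hV : F1 ∪ F2 ≠ Finset.univ) :
    ∃ u v : V, G.Adj u v ∧ u ∈ (F1 \ F2) ∪ (F2 \ F1) ∧ v ∉ F1 ∪ F2 := by
  classical
  set S : Finset V := F1 ∩ F2 with hSdef
  have hS : ¬ ((((↑S : Set V)ᶜ)).Subsingleton ∨ ¬ (G.induce ((↑S : Set V)ᶜ)).Connected) := by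
    intro h
    have hmem : S.card ∈ {n | ∃ T : Finset V, T.card = n ∧
        (((↑T : Set V)ᶜ).Subsingleton ∨ ¬ (G.induce ((↑T : Set V)ᶜ)).Connected)} := ⟨S, rfl, h⟩
    exact absurd (Nat.sInf_le hmem) (not_le.mpr hcap)
  push_neg at hS
  obtain ⟨-, hconn⟩ := hS
  -- pick x in symmetric difference
  have hx : ∃ x, x ∈ (F1 \ F2) ∪ (F2 \ F1) := by
    by_contra h
    push_neg at h
    apply hne
    ext a
    constructor <;> intro ha
    · by_contra h2
      exact (h a) (mem_union_left _ (mem_sdiff.mpr ⟨ha, h2⟩))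
    · by_contra h2
      exact (h a) (mem_union_right _ (mem_sdiff.mpr ⟨ha, h2⟩))
  obtain ⟨x, hxmem⟩ := hx
  obtain ⟨y, hymem⟩ : ∃ y, y ∉ F1 ∪ F2 := by
    by_contra h
    push_neg at h
    exact hV (Finset.eq_univ_iff_forall.mpr h)
  have hxS : x ∈ ((↑S : Set V)ᶜ) := by
    simp only [Set.mem_compl_iff, Finset.mem_coe]
    intro hin
    obtain ⟨h1, h2⟩ := Finset.mem_inter.mp hin
    rcases Finset.mem_union.mp hxmem with h | h
    · exact (Finset.mem_sdiff.mp h).2 h2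
    · exact (Finset.mem_sdiff.mp h).2 h1
  have hyS : y ∈ ((↑S : Set V)ᶜ) := by
    simp only [Set.mem_compl_iff, Finset.mem_coe]
    intro hin
    exact hymem (Finset.mem_union_left _ (Finset.mem_inter.mp hin).1)
  obtain ⟨w⟩ := hconn.preconnected ⟨x, hxS⟩ ⟨y, hyS⟩
  obtain ⟨u, v, hadj, hu, hv⟩ :=
    walk_cross (P := fun z : ((↑S : Set V)ᶜ : Set V) => (z : V) ∈ F1 ∪ F2) w
      (Finset.mem_union.mp hxmem |>.elim
        (fun h => Finset.mem_union_left _ (Finset.mem_sdiff.mp h).1)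
        (fun h => Finset.mem_union_right _ (Finset.mem_sdiff.mp h).1))
      hymem
  have huS : (u : V) ∉ S := fun h => u.2 (Finset.mem_coe.mpr h)
  refine ⟨u, v, hadj, ?_, hv⟩
  rcases Finset.mem_union.mp hu with h | h
  · refine Finset.mem_union_left _ (Finset.mem_sdiff.mpr ⟨h, fun h2 => ?_⟩)
    exact huS (Finset.mem_inter.mpr ⟨h, h2⟩)
  · refine Finset.mem_union_right _ (Finset.mem_sdiff.mpr ⟨h, fun h2 => ?_⟩)
    exact huS (Finset.mem_inter.mpr ⟨h2, h⟩)
end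

section
/- Let G be a t-connected simple graph with |V(G)| ≥ 2(t−h)+1, let F_e be a set of edges with |F_e| ≤ h where 0 ≤ h ≤ t, and let F₁, F₂ be two distinct vertex subsets with |F₁| ≤ t−h and |F₂| ≤ t−h. Then in the graph G − F_e there exists an edge from V − (F₁ ∪ F₂) to F₁ △ F₂. (Hence the h-edge tolerable diagnosability of G under the PMC model is at least t − h.) -/
open SimpleGraph Finset

variable {V : Type*}

/-- Along a walk in an induced subgraph, a property closed under adjacency propagates. -/
lemma reach_invariant {G : SimpleGraph V} {s X : Set V}
    (hcross : ∀ a b : V, a ∈ s → b ∈ s → G.Adj a b → a ∈ X → b ∈ X) :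
    ∀ {a b : s} (_ : (G.induce s).Walk a b), (a : V) ∈ X → (b : V) ∈ X := by
  intro a b p
  induction p with
  | nil => exact id
  | cons h _ ih =>
      exact fun ha => ih (hcross _ _ (Subtype.coe_prop _) (Subtype.coe_prop _) h ha)

/-- PMC lower bound: in a $t$-connected graph with enough vertices, after deleting at
most $h$ edges, any two distinct fault sets of size at most $t-h$ are distinguishable. -/
theorem pmc_lower_bound [Fintype V] [DecidableEq V] (G : SimpleGraph V) (t h : ℕ)
    (ht : t ≤ vConn G) (hh : h ≤ t) (hV : 2 * (t - h) + 1 ≤ Fintype.card V)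
    (Fe : Finset (Sym2 V)) (hFe : ↑Fe ⊆ G.edgeSet) (hFecard : Fe.card ≤ h)
    (F1 F2 : Finset V) (hne : F1 ≠ F2) (h1 : F1.card ≤ t - h) (h2 : F2.card ≤ t - h) :
    ∃ u v : V, (G.deleteEdges ↑Fe).Adj u v ∧ u ∉ F1 ∪ F2 ∧
      v ∈ (F1 \ F2) ∪ (F2 \ F1) := by
  classical
  by_contra hcon
  push_neg at hcon
  set X : Finset V := (F1 \ F2) ∪ (F2 \ F1) with hXdef
  set I : Finset V := F1 ∩ F2 with hIdef
  set Wf : Finset V := Finset.univ \ (F1 ∪ F2) with hWdef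
  have hXsub : X ⊆ F1 ∪ F2 := by
    intro a ha
    rcases Finset.mem_union.mp ha with h' | h'
    · exact Finset.mem_union_left _ (Finset.mem_sdiff.mp h').1
    · exact Finset.mem_union_right _ (Finset.mem_sdiff.mp h').1
  have hWmem : ∀ a, a ∈ Wf ↔ a ∉ F1 ∪ F2 := by
    intro a; simp [hWdef]
  have hXI : ∀ a, a ∈ X → a ∉ I := by
    intro a ha hai
    rcases Finset.mem_union.mp ha with h' | h'
    · exact (Finset.mem_sdiff.mp h').2 (Finset.mem_inter.mp hai).2
    · exact (Finset.mem_sdiff.mp h').2 (Finset.mem_inter.mp hai).1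
  have hXW : ∀ a, a ∈ X → a ∉ Wf := by
    intro a ha haw
    exact (hWmem a).mp haw (hXsub ha)
  have hIF : I ⊆ F1 ∪ F2 := fun a ha => Finset.mem_union_left _ (Finset.mem_inter.mp ha).1
  have hsplit : ∀ a, a ∉ X → a ∉ I → a ∈ Wf := by
    intro a haX haI
    rw [hWmem]
    intro haF
    rcases Finset.mem_union.mp haF with h' | h'
    · by_cases h2' : a ∈ F2
      · exact haI (Finset.mem_inter.mpr ⟨h', h2'⟩)
      · exact haX (Finset.mem_union_left _ (Finset.mem_sdiff.mpr ⟨h', h2'⟩))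
    · by_cases h1' : a ∈ F1
      · exact haI (Finset.mem_inter.mpr ⟨h1', h'⟩)
      · exact haX (Finset.mem_union_right _ (Finset.mem_sdiff.mpr ⟨h', h1'⟩))
  have hXne : X.Nonempty := by
    rw [hXdef]
    by_contra h'
    rw [Finset.not_nonempty_iff_eq_empty, Finset.union_eq_empty] at h'
    exact hne (Finset.Subset.antisymm (Finset.sdiff_eq_empty_iff_subset.mp h'.1)
      (Finset.sdiff_eq_empty_iff_subset.mp h'.2))
  have hI1 : I.card + 1 ≤ t - h := by
    obtain ⟨z, hz⟩ := hXne
    rcases Finset.mem_union.mp hz with h' | h'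
    · have hss : I ⊂ F1 := by
        rw [Finset.ssubset_iff_of_subset Finset.inter_subset_left]
        exact ⟨z, (Finset.mem_sdiff.mp h').1,
          fun hzi => (Finset.mem_sdiff.mp h').2 (Finset.mem_inter.mp hzi).2⟩
      have := Finset.card_lt_card hss
      omega
    · have hss : I ⊂ F2 := by
        rw [Finset.ssubset_iff_of_subset Finset.inter_subset_right]
        exact ⟨z, (Finset.mem_sdiff.mp h').1,
          fun hzi => (Finset.mem_sdiff.mp h').2 (Finset.mem_inter.mp hzi).1⟩
      have := Finset.card_lt_card hss
      omega
  by_cases hcase : ∃ x0 ∈ X, ∃ w0 ∈ Wf, s(x0, w0) ∉ Fe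
  · -- Case 1: we can find a pair not joined by a deleted edge
    obtain ⟨x0, hx0, w0, hw0, hnF⟩ := hcase
    set pred : Sym2 V → Prop := fun e => ∃ p : V × V, p.1 ∈ X ∧ p.2 ∈ Wf ∧ e = s(p.1, p.2)
      with hpreddef
    set f : Sym2 V → V := fun e =>
      if he : pred e then (if he.choose.1 = x0 then he.choose.2 else he.choose.1) else x0
      with hfdef
    set Fc : Finset (Sym2 V) := Fe.filter pred with hFcdef
    set M : Finset V := Fc.image f with hMdef
    set S : Finset V := I ∪ M with hSdef
    have key : ∀ e ∈ Fc, f e ∈ e ∧ f e ≠ x0 ∧ f e ≠ w0 := by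
      intro e he'
      have hp : pred e := (Finset.mem_filter.mp he').2
      have heFe : e ∈ Fe := (Finset.mem_filter.mp he').1
      obtain ⟨hx', hw', hee⟩ := hp.choose_spec
      have hfe : f e = if hp.choose.1 = x0 then hp.choose.2 else hp.choose.1 := dif_pos hp
      by_cases hxx : hp.choose.1 = x0
      · rw [hfe, if_pos hxx]
        refine ⟨?_, ?_, ?_⟩
        · have hm : (Exists.choose hp).2 ∈ s((Exists.choose hp).1, (Exists.choose hp).2) :=
            Sym2.mem_mk_right _ _
          rwa [← hee] at hm
        · intro hcontra
          exact hXW x0 hx0 (hcontra ▸ hw')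
        · intro hcontra
          apply hnF
          rw [← hxx, ← hcontra, ← hee]
          exact heFe
      · rw [hfe, if_neg hxx]
        refine ⟨?_, hxx, ?_⟩
        · have hm : (Exists.choose hp).1 ∈ s((Exists.choose hp).1, (Exists.choose hp).2) :=
            Sym2.mem_mk_left _ _
          rwa [← hee] at hm
        · intro hcontra
          exact hXW _ hx' (hcontra ▸ hw0)
    have hx0M : x0 ∉ M := by
      intro hx0m
      obtain ⟨e, heFc, hfe⟩ := Finset.mem_image.mp hx0m
      exact (key e heFc).2.1 hfe
    have hw0M : w0 ∉ M := by
      intro hw0m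
      obtain ⟨e, heFc, hfe⟩ := Finset.mem_image.mp hw0m
      exact (key e heFc).2.2 hfe
    have hMcard : M.card ≤ h :=
      le_trans Finset.card_image_le (le_trans (Finset.card_filter_le _ _) hFecard)
    have hScard : S.card ≤ t - 1 := by
      have hcu : S.card ≤ I.card + M.card := by
        rw [hSdef]; exact Finset.card_union_le I M
      omega
    have hvS : ¬((((↑S : Set V)ᶜ).Subsingleton) ∨ ¬ (G.induce ((↑S : Set V)ᶜ)).Connected) := by
      intro hbad
      have hle : vConn G ≤ S.card := Nat.sInf_le ⟨S, rfl, hbad⟩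
      omega
    push_neg at hvS
    obtain ⟨hnsub, hconn⟩ := hvS
    have hx0S : x0 ∉ S := by
      rw [hSdef, Finset.mem_union]
      push_neg
      exact ⟨hXI x0 hx0, hx0M⟩
    have hw0S : w0 ∉ S := by
      rw [hSdef, Finset.mem_union]
      push_neg
      refine ⟨fun hw0I => (hWmem w0).mp hw0 (hIF hw0I), hw0M⟩
    have hcross : ∀ a b : V, a ∈ ((↑S : Set V)ᶜ) → b ∈ ((↑S : Set V)ᶜ) → G.Adj a b →
        a ∈ (↑X : Set V) → b ∈ (↑X : Set V) := by
      intro a b haS hbS hab haX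
      by_contra hbX
      simp only [Set.mem_compl_iff, Finset.mem_coe] at haS hbS
      simp only [Finset.mem_coe] at haX hbX
      have hbI : b ∉ I := fun hbI' => hbS (Finset.mem_union_left _ hbI')
      have hbW : b ∈ Wf := hsplit b hbX hbI
      by_cases hbe : s(b, a) ∈ Fe
      · have hpred : pred (s(b, a)) := ⟨(a, b), haX, hbW, Sym2.eq_swap.symm⟩
        have hFc : s(b, a) ∈ Fc := Finset.mem_filter.mpr ⟨hbe, hpred⟩
        have hmem := (key _ hFc).1
        have hfM : f (s(b, a)) ∈ M := Finset.mem_image_of_mem f hFc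
        rcases Sym2.mem_iff.mp hmem with h' | h'
        · exact hbS (Finset.mem_union_right _ (h' ▸ hfM))
        · exact haS (Finset.mem_union_right _ (h' ▸ hfM))
      · have hadj : (G.deleteEdges ↑Fe).Adj b a := by
          rw [SimpleGraph.deleteEdges_adj]
          exact ⟨hab.symm, hbe⟩
        exact hcon b a hadj ((hWmem b).mp hbW) haX
    have hx0c : x0 ∈ ((↑S : Set V)ᶜ) := by simpa using hx0S
    have hw0c : w0 ∈ ((↑S : Set V)ᶜ) := by simpa using hw0S
    obtain ⟨p⟩ := hconn.preconnected ⟨x0, hx0c⟩ ⟨w0, hw0c⟩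
    have hw0X : w0 ∈ (↑X : Set V) := reach_invariant hcross p (by simpa using hx0)
    exact hXW w0 (by simpa using hw0X) hw0
  · -- Case 2: every pair X × Wf is a deleted edge; count degrees
    push_neg at hcase
    have hWne : Wf.Nonempty := by
      rw [hWdef, Finset.sdiff_nonempty]
      intro hsub
      have hc1 : Fintype.card V ≤ (F1 ∪ F2).card := by
        rw [← Finset.card_univ]
        exact Finset.card_le_card hsub
      have hc2 : (F1 ∪ F2).card ≤ F1.card + F2.card := Finset.card_union_le _ _
      omega
    obtain ⟨w, hw⟩ := hWne
    have hdeg : t ≤ Fintype.card V - 1 := by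
      have hvc : vConn G ≤ Fintype.card V - 1 := by
        apply Nat.sInf_le
        refine ⟨Finset.univ.erase w, ?_, Or.inl ?_⟩
        · rw [Finset.card_erase_of_mem (Finset.mem_univ w), Finset.card_univ]
        · intro a ha b hb
          simp only [Set.mem_compl_iff, Finset.coe_erase, Set.mem_diff,
            Finset.coe_univ, Set.mem_univ, true_and, Set.mem_singleton_iff,
            not_not] at ha hb
          rw [ha, hb]
      omega
    have hprod : X.card * Wf.card ≤ h := by
      have hinj : (X ×ˢ Wf).card ≤ Fe.card := by
        apply Finset.card_le_card_of_injOn (fun p => s(p.1, p.2))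
        · intro p hp
          obtain ⟨hp1, hp2⟩ := Finset.mem_product.mp hp
          exact hcase p.1 hp1 p.2 hp2
        · intro p hp q hq heq
          simp only [Finset.coe_product, Set.mem_prod, Finset.mem_coe] at hp hq
          rcases Sym2.eq_iff.mp heq with ⟨e1, e2⟩ | ⟨e1, e2⟩
          · exact Prod.ext e1 e2
          · exact (hXW q.2 (e1 ▸ hp.1) hq.2).elim
      rw [Finset.card_product] at hinj
      omega
    have hx1 : 1 ≤ X.card := Finset.card_pos.mpr hXne
    have hw1 : 1 ≤ Wf.card := Finset.card_pos.mpr ⟨w, hw⟩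
    have hsum : X.card + Wf.card ≤ X.card * Wf.card + 1 := by
      nlinarith
    have hdisjIX : Disjoint I X := by
      rw [Finset.disjoint_right]
      exact fun a ha => hXI a ha
    have hIX : I ∪ X = F1 ∪ F2 := by
      apply Finset.Subset.antisymm
      · exact Finset.union_subset hIF hXsub
      · intro a ha
        by_cases haX : a ∈ X
        · exact Finset.mem_union_right _ haX
        · by_cases haI : a ∈ I
          · exact Finset.mem_union_left _ haI
          · exact absurd ha ((hWmem a).mp (hsplit a haX haI))
    have hc1 : (F1 ∪ F2).card = I.card + X.card := by
      rw [← hIX, Finset.card_union_of_disjoint hdisjIX]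
    have hWfcard : Wf.card = Fintype.card V - (F1 ∪ F2).card := by
      rw [hWdef, Finset.card_sdiff_of_subset (Finset.subset_univ _), Finset.card_univ]
    have hle : (F1 ∪ F2).card ≤ Fintype.card V := Finset.card_le_univ _
    omega
end

section
/- Let G be a connected simple graph with minimum degree δ(G), let h satisfy 0 ≤ h ≤ δ(G), and let u be a vertex of G of minimum degree. Then there exist an edge set F_e with |F_e| ≤ h and two distinct vertex subsets F₁, F₂ with |F₁| ≤ δ(G) − h + 1 and |F₂| ≤ δ(G) − h + 1 such that in G − F_e there is no edge from V − (F₁ ∪ F₂) to F₁ △ F₂. (Hence t_h^e(G) ≤ δ(G) − h under the PMC model.) -/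
open SimpleGraph Finset

variable {V : Type*}

/-- PMC upper bound: for any $0 ≤ h ≤ δ(G)$ there are $h$ faulty edges and two distinct
indistinguishable fault sets of size at most $δ(G)-h+1$. -/
theorem pmc_upper_bound [Fintype V] [DecidableEq V] (G : SimpleGraph V)
    [DecidableRel G.Adj] (hconn : G.Connected) (h : ℕ) (hh : h ≤ G.minDegree)
    (u : V) (hu : G.degree u = G.minDegree) :
    ∃ Fe : Finset (Sym2 V), ↑Fe ⊆ G.edgeSet ∧ Fe.card ≤ h ∧
      ∃ F1 F2 : Finset V, F1 ≠ F2 ∧ F1.card ≤ G.minDegree - h + 1 ∧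
        F2.card ≤ G.minDegree - h + 1 ∧
        ¬ ∃ x y : V, (G.deleteEdges ↑Fe).Adj x y ∧ x ∉ F1 ∪ F2 ∧
            y ∈ (F1 \ F2) ∪ (F2 \ F1) := by
  have hcard : (G.neighborFinset u).card = G.minDegree := by
    rw [card_neighborFinset_eq_degree, hu]
  obtain ⟨S, hS, hScard⟩ := Finset.exists_subset_card_eq (s := G.neighborFinset u) (n := h)
    (by rw [hcard]; exact hh)
  refine ⟨S.image (fun v => s(u, v)), ?_, ?_, (G.neighborFinset u) \ S,
    insert u ((G.neighborFinset u) \ S), ?_, ?_, ?_, ?_⟩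
  · intro e he
    simp only [coe_image, Set.mem_image, mem_coe] at he
    obtain ⟨v, hv, rfl⟩ := he
    exact (G.mem_neighborFinset u v).mp (hS hv)
  · exact le_trans Finset.card_image_le hScard.le
  · intro heq
    have : u ∈ (G.neighborFinset u) \ S := by rw [heq]; exact mem_insert_self _ _
    exact (G.notMem_neighborFinset_self u) (mem_sdiff.mp this).1
  · have h2 := Finset.card_sdiff_of_subset hS
    omega
  · have h1 : ((G.neighborFinset u) \ S).card ≤ G.minDegree - h := by
      have h2 := Finset.card_sdiff_of_subset hS
      omega
    calc (insert u ((G.neighborFinset u) \ S)).card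
        ≤ ((G.neighborFinset u) \ S).card + 1 := Finset.card_insert_le _ _
      _ ≤ G.minDegree - h + 1 := by omega
  · rintro ⟨x, y, hxy, hx, hy⟩
    -- symmetric difference is {u}
    have hF1F2 : (G.neighborFinset u) \ S ⊆ insert u ((G.neighborFinset u) \ S) :=
      Finset.subset_insert _ _
    have hyu : y = u := by
      rcases Finset.mem_union.mp hy with hy1 | hy2
      · exact absurd (Finset.mem_sdiff.mp hy1).1 (fun hm =>
          (Finset.mem_sdiff.mp hy1).2 (hF1F2 hm))
      · have := Finset.mem_sdiff.mp hy2
        rcases Finset.mem_insert.mp this.1 with h' | h'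
        · exact h'
        · exact absurd h' this.2
    rw [hyu, SimpleGraph.deleteEdges_adj] at hxy
    obtain ⟨hadj, hne⟩ := hxy
    have hxN : x ∈ G.neighborFinset u := by
      rw [G.mem_neighborFinset]; exact hadj.symm
    have hxS : x ∉ S := by
      intro hxs
      apply hne
      rw [Finset.mem_coe, Finset.mem_image]
      exact ⟨x, hxs, Sym2.eq_swap.symm⟩
    have : x ∈ (G.neighborFinset u) \ S := Finset.mem_sdiff.mpr ⟨hxN, hxS⟩
    exact hx (Finset.mem_union.mpr (Or.inl this))
end

section
/- Let G be a maximally connected graph (κ(G) = δ(G)) with |V(G)| ≥ 2(δ(G)−h)+1 and 0 ≤ h ≤ δ(G). Then the h-edge tolerable diagnosability of G under the PMC model equals δ(G) − h. -/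
open SimpleGraph Finset

variable {V : Type*}

/-- A graph is $s$-diagnosable under the PMC model (Dahbura–Masson characterization). -/
def pmcDiagnosable [DecidableEq V] (G : SimpleGraph V) (s : ℕ) : Prop :=
  ∀ F1 F2 : Finset V, F1 ≠ F2 → F1.card ≤ s → F2.card ≤ s →
    ∃ u v : V, G.Adj u v ∧ u ∉ F1 ∪ F2 ∧ v ∈ (F1 \ F2) ∪ (F2 \ F1)

/-- The $h$-edge tolerable diagnosability under the PMC model. -/
noncomputable def pmcTolDiag [Fintype V] [DecidableEq V] (G : SimpleGraph V) (h : ℕ) : ℕ :=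
  sSup {s | ∀ Fe : Finset (Sym2 V), ↑Fe ⊆ G.edgeSet → Fe.card ≤ h →
    pmcDiagnosable (G.deleteEdges ↑Fe) s}

/-!
Upper bound: delete `h` edges at a vertex `v` of minimum degree `δ`; the remaining neighbourhood
`N` of `v` has `δ - h` vertices, and `N`, `N ∪ {v}` are indistinguishable.

Lower bound: if `F₁ ≠ F₂` of size at most `δ - h` are indistinguishable in `G - F_e`, every edge
of `G` between `D = F₁ △ F₂` and `W = V - (F₁ ∪ F₂)` lies in `F_e` (and `W ≠ ∅` by the vertex
count). If some vertex of `D` has no neighbour in `W`, then `F₁ ∩ F₂` together with the ends in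
`D` of these edges is a vertex cut of size `< δ = κ`. Otherwise `|D| ≤ h`, and each vertex of `D`
has at least `δ - |F₁ ∪ F₂| + 1 ≥ h + 2 - |D|` neighbours in `W`, giving more than `h` such edges.
-/

namespace SimpleGraph

section Interedges

variable {G : SimpleGraph V} [DecidableRel G.Adj]

theorem card_interedges_eq_sum (s t : Finset V) :
    #(G.interedges s t) = ∑ u ∈ s, #{w ∈ t | G.Adj u w} := by
  rw [interedges_def, card_filter, sum_product]
  simp only [card_filter]

theorem card_interedges_le_card_interedges_deleteEdges_add [DecidableEq V] {s t : Finset V}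
    (hst : Disjoint s t) (Fe : Finset (Sym2 V)) :
    #(G.interedges s t) ≤ #((G.deleteEdges ↑Fe).interedges s t) + #Fe := by
  rw [← card_filter_add_card_filter_not (s := G.interedges s t) (fun p => s(p.1, p.2) ∈ Fe),
    add_comm]
  gcongr
  · intro p hp
    simp only [mem_filter, mem_interedges_iff, deleteEdges_adj, mem_coe] at hp ⊢
    exact ⟨hp.1.1, hp.1.2.1, hp.1.2.2, hp.2⟩
  · refine card_le_card_of_injOn (fun p => s(p.1, p.2)) (fun p hp => (mem_filter.1 hp).2) ?_
    rintro ⟨a, b⟩ hp ⟨c, d⟩ hq heq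
    simp only [coe_filter, Set.mem_ofPred_eq, mem_interedges_iff] at hp hq
    rcases Sym2.eq_iff.1 heq with ⟨rfl, rfl⟩ | ⟨rfl, -⟩
    · rfl
    · exact absurd hq.1.2.1 (Finset.disjoint_left.1 hst hp.1.1)

end Interedges

variable [Fintype V] {G : SimpleGraph V}

theorem vConn_le_card_of_not_connected {S : Finset V}
    (h : ¬ (G.induce ((↑S : Set V)ᶜ)).Connected) : vConn G ≤ #S :=
  Nat.sInf_le ⟨S, rfl, Or.inr h⟩

theorem vConn_le_card_of_closed {S : Finset V} {A : Set V}
    (hA : ∀ x y, G.Adj x y → x ∈ A → y ∉ S → y ∈ A) {a b : V} (ha : a ∈ A) (haS : a ∉ S)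
    (hb : b ∉ A) (hbS : b ∉ S) : vConn G ≤ #S := by
  refine vConn_le_card_of_not_connected fun hconn => ?_
  obtain ⟨p⟩ := hconn.preconnected ⟨a, haS⟩ ⟨b, hbS⟩
  obtain ⟨d, -, hd₁, hd₂⟩ :=
    p.exists_boundary_dart {x : ((↑S : Set V)ᶜ : Set V) | (x : V) ∈ A} ha hb
  exact hd₂ (hA _ _ d.adj hd₁ d.snd.2)

variable [DecidableEq V] [DecidableRel G.Adj]

theorem degree_lt_card_compl_add_card_filter_adj {W : Finset V} {u : V} (hu : u ∉ W) :
    G.degree u < #Wᶜ + #{w ∈ W | G.Adj u w} := by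
  have hsub : G.neighborFinset u ⊆ Wᶜ.erase u ∪ {w ∈ W | G.Adj u w} := by
    intro w hw
    rw [mem_neighborFinset] at hw
    by_cases hwW : w ∈ W <;> simp [hwW, hw, hw.ne']
  have hu' : u ∈ Wᶜ := mem_compl.2 hu
  calc G.degree u = #(G.neighborFinset u) := (card_neighborFinset_eq_degree G u).symm
    _ ≤ #(Wᶜ.erase u) + #{w ∈ W | G.Adj u w} := (card_le_card hsub).trans (card_union_le _ _)
    _ < #Wᶜ + #{w ∈ W | G.Adj u w} := by
      rw [card_erase_of_mem hu']
      have := card_pos.2 ⟨u, hu'⟩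
      omega

theorem minDegree_le_card_compl_add_card_interedges (hκ : G.minDegree ≤ vConn G)
    {D W : Finset V} (hDW : Disjoint D W) (hD : D.Nonempty) (hW : W.Nonempty) :
    G.minDegree ≤ #(D ∪ W)ᶜ + #(G.interedges D W) := by
  by_contra! hlt
  set E := G.interedges D W
  set X := E.image Prod.fst
  have hX : #X ≤ #E := card_image_le
  by_cases hDX : D ⊆ X
  · -- `#D * (#E + 2 - #D) ≤ #E` is impossible for `1 ≤ #D ≤ #E`
    have hd : #D ≤ #E := (card_le_card hDX).trans hX
    have hWc : #Wᶜ ≤ #(D ∪ W)ᶜ + #D :=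
      (card_le_card fun x hx => by by_cases x ∈ D <;> simp_all).trans (card_union_le _ _)
    have hdeg : ∀ u ∈ D, #E + 2 - #D ≤ #{w ∈ W | G.Adj u w} := fun u hu => by
      have := G.degree_lt_card_compl_add_card_filter_adj (Finset.disjoint_left.1 hDW hu)
      have := G.minDegree_le_degree u
      omega
    have hsum := card_nsmul_le_sum D _ _ hdeg
    rw [← card_interedges_eq_sum, smul_eq_mul] at hsum
    obtain ⟨k, hk⟩ : ∃ k, #E + 2 = #D + k := ⟨#E + 2 - #D, by omega⟩
    have hD1 := card_pos.2 hD
    rw [hk, Nat.add_sub_cancel_left] at hsum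
    nlinarith
  · -- a vertex of `D` without neighbours in `W` is cut off from `W` by `(D ∪ W)ᶜ ∪ X`
    obtain ⟨u, huD, huX⟩ := not_subset.1 hDX
    obtain ⟨w, hwW⟩ := hW
    have hXD : X ⊆ D := fun x hx => by
      obtain ⟨p, hp, rfl⟩ := mem_image.1 hx
      exact (G.mem_interedges_iff.1 hp).1
    have hwD : w ∉ D := Finset.disjoint_right.1 hDW hwW
    have hwX : w ∉ X := fun h => hwD (hXD h)
    have hcut : vConn G ≤ #((D ∪ W)ᶜ ∪ X) := by
      refine vConn_le_card_of_closed (A := ↑(D \ X)) ?_ (a := u) (b := w)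
        (by simp [huD, huX]) (by simp [huD, huX]) (by simp [hwD]) (by simp [hwW, hwX])
      intro x y hxy hx hy
      have hxD : x ∈ D ∧ x ∉ X := by simpa using hx
      have hyX : y ∉ X := fun h => hy (mem_union_right _ h)
      have hyDW : y ∈ D ∨ y ∈ W := by
        by_contra h
        exact hy (mem_union_left _ (by simpa using h))
      rcases hyDW with hyD | hyW
      · simp [hyD, hyX]
      · exact absurd (mem_image.2 ⟨(x, y), G.mem_interedges_iff.2 ⟨hxD.1, hyW, hxy⟩, rfl⟩)
          hxD.2
    have := card_union_le (D ∪ W)ᶜ X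
    omega

end SimpleGraph

theorem Finset.card_inter_lt_of_ne [DecidableEq V] {F₁ F₂ : Finset V} {s : ℕ} (hne : F₁ ≠ F₂)
    (h₁ : #F₁ ≤ s) (h₂ : #F₂ ≤ s) : #(F₁ ∩ F₂) < s := by
  rcases not_and_or.1 (mt (fun h => subset_antisymm h.1 h.2) hne) with h | h
  · exact (card_lt_card (inf_lt_left.2 h)).trans_le h₁
  · exact (card_lt_card (inf_lt_right.2 h)).trans_le h₂

section PMC

variable [DecidableEq V]

theorem pmcDiagnosable.mono {H : SimpleGraph V} {s t : ℕ} (hst : s ≤ t)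
    (h : pmcDiagnosable H t) : pmcDiagnosable H s :=
  fun F₁ F₂ hne h₁ h₂ => h F₁ F₂ hne (h₁.trans hst) (h₂.trans hst)

theorem not_pmcDiagnosable_of_adj_mem {H : SimpleGraph V} {v : V} {N : Finset V} (hvN : v ∉ N)
    (hN : ∀ u, H.Adj u v → u ∈ N) : ¬ pmcDiagnosable H (#N + 1) := by
  intro hdiag
  obtain ⟨u, w, huw, hu, hw⟩ := hdiag N (insert v N) (fun h => hvN (h ▸ mem_insert_self v N))
    (by omega) (card_insert_le v N)
  have hwv : w = v := by
    simp only [mem_union, mem_sdiff, mem_insert] at hw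
    tauto
  subst hwv
  exact hu (mem_union_left _ (hN u huw))

theorem exists_not_pmcDiagnosable_deleteEdges [Fintype V] (G : SimpleGraph V)
    [DecidableRel G.Adj] (v : V) {h : ℕ} (hh : h ≤ G.degree v) :
    ∃ Fe : Finset (Sym2 V), ↑Fe ⊆ G.edgeSet ∧ #Fe = h ∧
      ¬ pmcDiagnosable (G.deleteEdges ↑Fe) (G.degree v - h + 1) := by
  obtain ⟨M, hM, hMcard⟩ := exists_subset_card_eq (s := G.neighborFinset v) (n := h)
    (by rwa [card_neighborFinset_eq_degree])
  refine ⟨M.map (Sym2.mkEmbedding v), ?_, by rw [card_map, hMcard], ?_⟩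
  · intro e he
    obtain ⟨w, hw, rfl⟩ := mem_map.1 he
    exact (G.mem_neighborFinset v w).1 (hM hw)
  · have hN : #(G.neighborFinset v \ M) = G.degree v - h := by
      rw [card_sdiff_of_subset hM, card_neighborFinset_eq_degree, hMcard]
    rw [← hN]
    refine not_pmcDiagnosable_of_adj_mem (v := v) (by simp) fun u hu => ?_
    rw [deleteEdges_adj] at hu
    refine mem_sdiff.2 ⟨(G.mem_neighborFinset v u).2 hu.1.symm, fun huM => hu.2 ?_⟩
    rw [Sym2.eq_swap]
    exact mem_map_of_mem _ huM

theorem pmcDiagnosable_deleteEdges [Fintype V] {G : SimpleGraph V} [DecidableRel G.Adj]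
    (hκ : G.minDegree ≤ vConn G) {h : ℕ} (hV : 2 * (G.minDegree - h) + 1 ≤ Fintype.card V)
    {Fe : Finset (Sym2 V)} (hFe : #Fe ≤ h) :
    pmcDiagnosable (G.deleteEdges ↑Fe) (G.minDegree - h) := by
  intro F₁ F₂ hne h₁ h₂
  by_contra! hind
  set D := F₁ \ F₂ ∪ F₂ \ F₁
  set W := (F₁ ∪ F₂)ᶜ
  have hDW : Disjoint D W := disjoint_compl_right.mono_left (union_subset
    (sdiff_subset.trans subset_union_left) (sdiff_subset.trans subset_union_right))
  have hD : D.Nonempty := by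
    rw [nonempty_iff_ne_empty, Ne, union_eq_empty, sdiff_eq_empty_iff_subset,
      sdiff_eq_empty_iff_subset]
    exact fun h => hne (subset_antisymm h.1 h.2)
  have hW : W.Nonempty := by
    rw [← card_pos, card_compl]
    have := card_union_le F₁ F₂
    omega
  have hC : #(D ∪ W)ᶜ < G.minDegree - h := by
    refine (card_le_card fun x hx => ?_).trans_lt (card_inter_lt_of_ne hne h₁ h₂)
    simp only [D, W, mem_compl, mem_union, mem_sdiff, mem_inter] at hx ⊢
    tauto
  have hE : #(G.interedges D W) ≤ #Fe := by
    have hempty : (G.deleteEdges ↑Fe).interedges D W = ∅ := by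
      refine eq_empty_of_forall_notMem fun ⟨u, w⟩ huw => ?_
      obtain ⟨huD, hwW, hadj⟩ := (mem_interedges_iff (G.deleteEdges ↑Fe)).1 huw
      exact hind w u hadj.symm (mem_compl.1 hwW) huD
    simpa [hempty] using card_interedges_le_card_interedges_deleteEdges_add (G := G) hDW Fe
  have := minDegree_le_card_compl_add_card_interedges hκ hDW hD hW
  omega

end PMC

/-- A maximally connected graph $G$ with enough vertices has $t_h^e(G) = δ(G) - h$
under the PMC model. -/
theorem pmc_maximally_connected [Fintype V] [DecidableEq V] (G : SimpleGraph V)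
    [DecidableRel G.Adj] (hmax : vConn G = G.minDegree) (h : ℕ)
    (hh : h ≤ G.minDegree) (hV : 2 * (G.minDegree - h) + 1 ≤ Fintype.card V) :
    pmcTolDiag G h = G.minDegree - h := by
  have : Nonempty V := Fintype.card_pos_iff.1 (by omega)
  obtain ⟨v, hv⟩ := G.exists_minimal_degree_vertex
  refine IsGreatest.csSup_eq
    ⟨fun Fe _ hFe => pmcDiagnosable_deleteEdges hmax.ge hV hFe, fun s hs => ?_⟩
  obtain ⟨Fe, hFeE, hFe, hnot⟩ := exists_not_pmcDiagnosable_deleteEdges G v (hv ▸ hh)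
  by_contra! hlt
  exact hnot ((hs Fe hFeE hFe.le).mono (by omega))
end

section
/- Let G be a t-connected network with N vertices where t ≥ 2 and N ≥ 2t + 1. Then G is t-diagnosable under the PMC model: for any two distinct vertex subsets F₁, F₂ with |F₁| ≤ t and |F₂| ≤ t, there is an edge from V − (F₁ ∪ F₂) to F₁ △ F₂. -/
open SimpleGraph Finset

variable {V : Type*}

/-- Hakimi–Amin: a $t$-connected graph with at least $2t+1$ vertices is $t$-diagnosable
under the PMC model. -/
theorem hakimi_amin [Fintype V] [DecidableEq V] (G : SimpleGraph V) (t : ℕ)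
    (ht2 : 2 ≤ t) (ht : t ≤ vConn G) (hV : 2 * t + 1 ≤ Fintype.card V)
    (F1 F2 : Finset V) (hne : F1 ≠ F2) (h1 : F1.card ≤ t) (h2 : F2.card ≤ t) :
    ∃ u v : V, G.Adj u v ∧ u ∉ F1 ∪ F2 ∧ v ∈ (F1 \ F2) ∪ (F2 \ F1) := by
  set S : Finset V := F1 ∩ F2 with hS
  -- symmetric difference nonempty
  obtain ⟨b, hb⟩ : ((F1 \ F2) ∪ (F2 \ F1)).Nonempty := by
    rw [Finset.nonempty_iff_ne_empty]
    intro h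
    rw [Finset.union_eq_empty] at h
    exact hne (Finset.Subset.antisymm (Finset.sdiff_eq_empty_iff_subset.1 h.1)
      (Finset.sdiff_eq_empty_iff_subset.1 h.2))
  -- S has card < t
  have hScard : S.card < t := by
    rcases Finset.mem_union.1 hb with h | h
    · rcases Finset.mem_sdiff.1 h with ⟨hb1, hb2⟩
      have : S ⊆ F1.erase b := fun x hx => Finset.mem_erase.2
        ⟨fun he => hb2 (he ▸ (Finset.mem_inter.1 hx).2), (Finset.mem_inter.1 hx).1⟩
      calc S.card ≤ (F1.erase b).card := Finset.card_le_card this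
        _ < F1.card := Finset.card_erase_lt_of_mem hb1
        _ ≤ t := h1
    · rcases Finset.mem_sdiff.1 h with ⟨hb1, hb2⟩
      have : S ⊆ F2.erase b := fun x hx => Finset.mem_erase.2
        ⟨fun he => hb2 (he ▸ (Finset.mem_inter.1 hx).1), (Finset.mem_inter.1 hx).2⟩
      calc S.card ≤ (F2.erase b).card := Finset.card_le_card this
        _ < F2.card := Finset.card_erase_lt_of_mem hb1
        _ ≤ t := h2
  -- S is not a cut
  have hcut : ¬ ((((↑S : Set V)ᶜ).Subsingleton ∨ ¬ (G.induce ((↑S : Set V)ᶜ)).Connected)) := by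
    intro h
    have : vConn G ≤ S.card := csInf_le (OrderBot.bddBelow _) ⟨S, rfl, h⟩
    omega
  push_neg at hcut
  obtain ⟨hns, hconn⟩ := hcut
  -- a vertex outside F1 ∪ F2
  obtain ⟨a, ha⟩ : ∃ a : V, a ∉ F1 ∪ F2 := by
    by_contra h
    push_neg at h
    have : (Finset.univ : Finset V) ⊆ F1 ∪ F2 := fun x _ => h x
    have hc : Fintype.card V ≤ (F1 ∪ F2).card := by
      simpa using Finset.card_le_card this
    have := Finset.card_union_le F1 F2
    omega
  have haS : (a : V) ∈ ((↑S : Set V)ᶜ) := by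
    intro h
    rw [Finset.mem_coe, hS, Finset.mem_inter] at h
    exact ha (Finset.mem_union_left _ h.1)
  have hbF : b ∈ F1 ∪ F2 := by
    rcases Finset.mem_union.1 hb with h | h
    · exact Finset.mem_union_left _ (Finset.mem_sdiff.1 h).1
    · exact Finset.mem_union_right _ (Finset.mem_sdiff.1 h).1
  have hbS : (b : V) ∈ ((↑S : Set V)ᶜ) := by
    intro h'
    rw [Finset.mem_coe, hS, Finset.mem_inter] at h'
    rcases Finset.mem_union.1 hb with h | h
    · exact (Finset.mem_sdiff.1 h).2 h'.2
    · exact (Finset.mem_sdiff.1 h).2 h'.1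
  -- walk from a to b in the induced graph
  obtain ⟨p⟩ := hconn.preconnected ⟨a, haS⟩ ⟨b, hbS⟩
  obtain ⟨d, _, hd1, hd2⟩ := p.exists_boundary_dart
    {x : ↥((↑S : Set V)ᶜ) | (x : V) ∉ F1 ∪ F2} ha (by simp only [Set.mem_setOf_eq, not_not]; exact hbF)
  refine ⟨(d.fst : V), (d.snd : V), d.adj, hd1, ?_⟩
  simp only [Set.mem_setOf_eq, not_not] at hd2
  have hdS : (d.snd : V) ∉ S := fun h => d.snd.2 (Finset.mem_coe.2 h)
  rcases Finset.mem_union.1 hd2 with h | h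
  · exact Finset.mem_union_left _ (Finset.mem_sdiff.2 ⟨h,
      fun h2' => hdS (Finset.mem_inter.2 ⟨h, h2'⟩)⟩)
  · by_cases h1' : (d.snd : V) ∈ F1
    · exact absurd (Finset.mem_inter.2 ⟨h1', h⟩) hdS
    · exact Finset.mem_union_right _ (Finset.mem_sdiff.2 ⟨h, h1'⟩)
end

section
/- Let H be a simple graph, F₁, F₂ distinct indistinguishable vertex subsets under the MM* model with H − (F₁∩F₂) connected and V(H) ≠ F₁∪F₂, and let u ∈ V(H) − (F₁ ∪ F₂). Then |F₁ ∩ F₂| ≥ deg_H(u) − 2. -/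
open SimpleGraph Finset

variable {V : Type*}

/-- Two fault sets are distinguishable under the MM* model (Sengupta–Dahbura). -/
def mmDistinguishable [DecidableEq V] (G : SimpleGraph V) (F1 F2 : Finset V) : Prop :=
  (∃ u w v : V, u ∉ F1 ∪ F2 ∧ w ∉ F1 ∪ F2 ∧ v ∈ (F1 \ F2) ∪ (F2 \ F1) ∧ G.Adj u v ∧ G.Adj u w) ∨
  (∃ u v w : V, u ∈ F1 \ F2 ∧ v ∈ F1 \ F2 ∧ u ≠ v ∧ w ∉ F1 ∪ F2 ∧ G.Adj u w ∧ G.Adj v w) ∨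
  (∃ u v w : V, u ∈ F2 \ F1 ∧ v ∈ F2 \ F1 ∧ u ≠ v ∧ w ∉ F1 ∪ F2 ∧ G.Adj u w ∧ G.Adj v w)

lemma aux_walk [DecidableEq V] (H : SimpleGraph V) (F1 F2 : Finset V) :
    ∀ {a b : ↥((↑(F1 ∩ F2) : Set V)ᶜ)}
      (_ : (H.induce ((↑(F1 ∩ F2) : Set V)ᶜ)).Walk a b),
      (a : V) ∉ F1 ∪ F2 → (b : V) ∈ (F1 \ F2) ∪ (F2 \ F1) →
      (∃ w, w ∉ F1 ∪ F2 ∧ H.Adj (a : V) w) →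
      (∃ u w v : V, u ∉ F1 ∪ F2 ∧ w ∉ F1 ∪ F2 ∧ v ∈ (F1 \ F2) ∪ (F2 \ F1) ∧ H.Adj u v ∧ H.Adj u w) := by
  intro a b p
  induction p with
  | nil =>
    intro ha hb _
    exfalso
    simp only [Finset.mem_union, Finset.mem_sdiff] at ha hb
    tauto
  | @cons a c b h q ih =>
    intro ha hb hw
    have hadj : H.Adj (a : V) (c : V) := h
    by_cases hc : (c : V) ∈ (F1 \ F2) ∪ (F2 \ F1)
    · obtain ⟨w, hw1, hw2⟩ := hw
      exact ⟨a, w, c, ha, hw1, hc, hadj, hw2⟩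
    · have hc2 : (c : V) ∉ F1 ∩ F2 := by
        have := c.2
        simpa using this
      have hc' : (c : V) ∉ F1 ∪ F2 := by
        simp only [Finset.mem_union, Finset.mem_sdiff, Finset.mem_inter] at hc hc2 ⊢
        tauto
      exact ih hc' hb ⟨a, ha, hadj.symm⟩

/-- Under the hypotheses of the independence lemma, any vertex $u$ outside
$F_1 ∪ F_2$ satisfies $|F_1 ∩ F_2| ≥ \deg_H(u) - 2$. -/
theorem mm_intersection_lower [Fintype V] [DecidableEq V] (H : SimpleGraph V)
    [DecidableRel H.Adj] (F1 F2 : Finset V) (hne : F1 ≠ F2)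
    (hind : ¬ mmDistinguishable H F1 F2)
    (hconn : (H.induce ((↑(F1 ∩ F2) : Set V)ᶜ)).Connected)
    (hV : F1 ∪ F2 ≠ Finset.univ) (u : V) (hu : u ∉ F1 ∪ F2) :
    H.degree u - 2 ≤ (F1 ∩ F2).card := by
  obtain ⟨v, hv⟩ : ((F1 \ F2) ∪ (F2 \ F1)).Nonempty := by
    rw [Finset.nonempty_iff_ne_empty]
    intro h
    rw [Finset.union_eq_empty, Finset.sdiff_eq_empty_iff_subset,
      Finset.sdiff_eq_empty_iff_subset] at h
    exact hne (Finset.Subset.antisymm h.1 h.2)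
  have huS : u ∈ ((↑(F1 ∩ F2) : Set V)ᶜ) := by
    simp only [Set.mem_compl_iff, Finset.coe_inter, Set.mem_inter_iff, Finset.mem_coe]
    simp only [Finset.mem_union] at hu
    tauto
  have hvS : v ∈ ((↑(F1 ∩ F2) : Set V)ᶜ) := by
    simp only [Set.mem_compl_iff, Finset.coe_inter, Set.mem_inter_iff, Finset.mem_coe]
    simp only [Finset.mem_union, Finset.mem_sdiff] at hv
    tauto
  -- u has no neighbor outside F1 ∪ F2
  have hout : ∀ w, H.Adj u w → w ∈ F1 ∪ F2 := by
    intro w hw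
    by_contra hwout
    obtain ⟨p⟩ := hconn.preconnected ⟨u, huS⟩ ⟨v, hvS⟩
    exact hind (Or.inl (aux_walk H F1 F2 p hu hv ⟨w, hwout, hw⟩))
  -- at most one neighbor in each difference set
  have h1 : (H.neighborFinset u ∩ (F1 \ F2)).card ≤ 1 := by
    rw [Finset.card_le_one]
    intro a ha b hb
    by_contra hab
    simp only [Finset.mem_inter, mem_neighborFinset] at ha hb
    exact hind (Or.inr (Or.inl ⟨a, b, u, ha.2, hb.2, hab, hu, ha.1.symm, hb.1.symm⟩))
  have h2 : (H.neighborFinset u ∩ (F2 \ F1)).card ≤ 1 := by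
    rw [Finset.card_le_one]
    intro a ha b hb
    by_contra hab
    simp only [Finset.mem_inter, mem_neighborFinset] at ha hb
    exact hind (Or.inr (Or.inr ⟨a, b, u, ha.2, hb.2, hab, hu, ha.1.symm, hb.1.symm⟩))
  have hsub : H.neighborFinset u ⊆
      (F1 ∩ F2) ∪ (H.neighborFinset u ∩ (F1 \ F2)) ∪ (H.neighborFinset u ∩ (F2 \ F1)) := by
    intro x hx
    have hadj : H.Adj u x := by rwa [mem_neighborFinset] at hx
    have := hout x hadj
    simp only [Finset.mem_union, Finset.mem_inter, Finset.mem_sdiff] at this ⊢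
    rcases this with h | h
    · by_cases h2' : x ∈ F2
      · tauto
      · tauto
    · by_cases h1' : x ∈ F1
      · tauto
      · tauto
  have hcard := Finset.card_le_card hsub
  have := Finset.card_union_le ((F1 ∩ F2) ∪ (H.neighborFinset u ∩ (F1 \ F2)))
    (H.neighborFinset u ∩ (F2 \ F1))
  have := Finset.card_union_le (F1 ∩ F2) (H.neighborFinset u ∩ (F1 \ F2))
  rw [SimpleGraph.degree]
  omega
end

section
/- Let δ ≥ 3, l ≥ δ + 2, and let Γ₅(δ, l) be a graph consisting of a graph H on δ+1 vertices together with l additional independent vertices, each additional vertex joined to either δ or δ+1 vertices of H (and no other edges). Then Γ₅(δ, l) is not a regular graph. -/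
open SimpleGraph Finset

variable {V : Type*}

/-- $Γ_5(δ, l)$ is not a regular graph for $δ ≥ 3$ and $l ≥ δ+2$. -/
theorem gamma5_irregular [Fintype V] [DecidableEq V] (δ l : ℕ) (hδ : 3 ≤ δ)
    (hl : δ + 2 ≤ l) (G : SimpleGraph V) [DecidableRel G.Adj] (A : Finset V)
    (hA : A.card = δ + 1) (hW : Aᶜ.card = l)
    (hN : ∀ w ∉ A, G.neighborFinset w ⊆ A ∧ δ ≤ (G.neighborFinset w).card ∧
      (G.neighborFinset w).card ≤ δ + 1) :
    ∃ x y : V, G.degree x ≠ G.degree y := by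
  by_contra h
  push_neg at h
  have hWne : Aᶜ.Nonempty := by
    rw [← Finset.card_pos, hW]; omega
  obtain ⟨w0, hw0⟩ := hWne
  set d := G.degree w0 with hd
  have hdall : ∀ x, G.degree x = d := fun x => h x w0
  have hwA : w0 ∉ A := Finset.mem_compl.mp hw0
  obtain ⟨hsub0, hge0, hle0⟩ := hN w0 hwA
  have hdδ : δ ≤ d := hge0
  -- double counting edges between Aᶜ and A
  have key : ∑ w ∈ Aᶜ, (G.neighborFinset w).card
      = ∑ a ∈ A, ((Aᶜ).filter (G.Adj a)).card := by
    have h1 : ∀ w ∈ Aᶜ, (G.neighborFinset w).card = (A.filter (fun a => G.Adj w a)).card := by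
      intro w hw
      congr 1
      ext a
      simp only [SimpleGraph.mem_neighborFinset, Finset.mem_filter]
      constructor
      · intro hadj
        exact ⟨(hN w (Finset.mem_compl.mp hw)).1
          ((SimpleGraph.mem_neighborFinset G w a).mpr hadj), hadj⟩
      · exact fun ⟨_, hadj⟩ => hadj
    rw [Finset.sum_congr rfl h1]
    simp_rw [Finset.card_filter]
    rw [Finset.sum_comm]
    refine Finset.sum_congr rfl fun a _ => Finset.sum_congr rfl fun w _ => ?_
    simp [G.adj_comm]
  have hL : ∑ w ∈ Aᶜ, (G.neighborFinset w).card = l * d := by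
    rw [Finset.sum_congr rfl fun w _ => (G.card_neighborFinset_eq_degree w).trans (hdall w)]
    rw [Finset.sum_const, hW, smul_eq_mul]
  have hR : ∑ a ∈ A, ((Aᶜ).filter (G.Adj a)).card ≤ (δ + 1) * d := by
    calc ∑ a ∈ A, ((Aᶜ).filter (G.Adj a)).card
        ≤ ∑ a ∈ A, d := by
          refine Finset.sum_le_sum fun a _ => ?_
          rw [← hdall a, ← G.card_neighborFinset_eq_degree a]
          refine Finset.card_le_card fun x hx => ?_
          rw [SimpleGraph.mem_neighborFinset]
          exact (Finset.mem_filter.mp hx).2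
      _ = (δ + 1) * d := by rw [Finset.sum_const, hA, smul_eq_mul]
  have hld : l * d ≤ (δ + 1) * d := by omega
  have hdpos : 0 < d := by omega
  have := Nat.le_of_mul_le_mul_right (by linarith [hld] : l * d ≤ (δ + 1) * d) hdpos
  omega
end

section
/- Let G be a t-connected simple graph with t ≥ 3 and |V(G)| ≥ 2(t−h)+3, where 0 ≤ h ≤ ⌊(t−1)/2⌋. Let F_e be an edge set with |F_e| ≤ h and F₁, F₂ distinct vertex subsets indistinguishable in G − F_e under the MM* model, with |F₁ ∩ F₂| ≤ t − h − 1 and V ≠ F₁ ∪ F₂. Then for every vertex u ∈ V − (F₁ ∪ F₂), |F₁ ∩ F₂| ≥ deg_G(u) − h − 2 ≥ t − h − 2. -/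
/-!
Deleting fewer than `κ(G)` vertices and edges in total leaves `G` connected: replace a deleted
edge by one of its endpoints and induct. As `|F₁ ∩ F₂| + |F_e| < t`, the vertex `u` is therefore
joined to `F₁ △ F₂` by a path of `G - F_e` avoiding `F₁ ∩ F₂`. If `u` had a neighbour outside
`F₁ ∪ F₂`, the first MM* condition would propagate "outside `F₁ ∪ F₂`, with a neighbour outside
`F₁ ∪ F₂`" along this path into `F₁ △ F₂`, which is absurd. So every neighbour of `u` in `G` lies
in `F₁ ∩ F₂`, is an edge of `F_e` away, or is one of at most one neighbour in each of `F₁ - F₂`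
and `F₂ - F₁`.
-/

open SimpleGraph Finset

variable {V : Type*}

namespace SimpleGraph

@[simp]
lemma spanningCoe_induce_adj {G : SimpleGraph V} {s : Set V} {a b : V} :
    (G.induce s).spanningCoe.Adj a b ↔ G.Adj a b ∧ a ∈ s ∧ b ∈ s := by
  constructor
  · rintro ⟨-, a', b', h, rfl, rfl⟩
    exact ⟨h, a'.2, b'.2⟩
  · rintro ⟨h, ha, hb⟩
    exact ⟨h.ne, ⟨a, ha⟩, ⟨b, hb⟩, h, rfl, rfl⟩

lemma Reachable.spanningCoe_induce {G : SimpleGraph V} {s : Set V} {a b : s}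
    (h : (G.induce s).Reachable a b) : (G.induce s).spanningCoe.Reachable a b :=
  h.map (Embedding.map _ _).toHom

end SimpleGraph

section Connectivity

variable [Fintype V] (G : SimpleGraph V)

lemma vConn_le_card {S : Finset V}
    (hS : ((↑S : Set V)ᶜ).Subsingleton ∨ ¬ (G.induce (↑S : Set V)ᶜ).Connected) :
    vConn G ≤ #S :=
  Nat.sInf_le ⟨S, rfl, hS⟩

lemma connected_induce_compl_of_card_lt_vConn {S : Finset V} (hS : #S < vConn G) :
    (G.induce (↑S : Set V)ᶜ).Connected := by
  by_contra h
  exact (vConn_le_card G (.inr h)).not_gt hS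

lemma vConn_le_degree [DecidableRel G.Adj] (v : V) : vConn G ≤ G.degree v := by
  refine vConn_le_card G (S := G.neighborFinset v) (or_iff_not_imp_left.2 fun hS hconn => ?_)
  have hv : v ∈ (↑(G.neighborFinset v) : Set V)ᶜ := by simp
  obtain ⟨z, hz, hzv⟩ := (Set.not_subsingleton_iff.1 hS).exists_ne v
  obtain ⟨p⟩ := hconn.preconnected ⟨v, hv⟩ ⟨z, hz⟩
  cases p with
  | nil => exact hzv rfl
  | @cons _ w _ hadj _ => exact w.2 (by simpa using hadj)

lemma reachable_induce_compl_deleteEdges (K : Finset V) {Fe : Finset (Sym2 V)}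
    (hFe : ↑Fe ⊆ G.edgeSet) (hlt : #K + #Fe < vConn G) {a b : V} (ha : a ∉ K) (hb : b ∉ K) :
    ((G.deleteEdges ↑Fe).induce (↑K : Set V)ᶜ).spanningCoe.Reachable a b := by
  classical
  induction Fe using Finset.induction_on generalizing K a b with
  | empty =>
    rw [coe_empty, deleteEdges_empty]
    exact Reachable.spanningCoe_induce (a := ⟨a, ha⟩) (b := ⟨b, hb⟩)
      ((connected_induce_compl_of_card_lt_vConn G (by simpa using hlt)).preconnected _ _)
  | @insert e Fe he ih =>
    obtain ⟨x, y⟩ := e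
    rw [coe_insert, Set.insert_subset_iff] at hFe
    have hxy : x ≠ y := G.ne_of_adj hFe.1
    rw [card_insert_of_notMem he] at hlt
    set H := ((G.deleteEdges ↑(insert s(x, y) Fe)).induce (↑K : Set V)ᶜ).spanningCoe
    -- Removing an endpoint of `xy` instead of the edge itself keeps the budget.
    have avoiding : ∀ p ∈ s(x, y), ∀ a b, a ∉ K → b ∉ K → a ≠ p → b ≠ p → H.Reachable a b := by
      intro p hp a b ha hb hap hbp
      have hcard : #(insert p K) ≤ #K + 1 := card_insert_le _ _
      refine (ih (insert p K) hFe.2 (by omega) (by simp [ha, hap]) (by simp [hb, hbp])).mono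
        fun c d hcd => ?_
      rw [spanningCoe_induce_adj] at hcd ⊢
      simp only [deleteEdges_adj, coe_insert, Set.mem_compl_iff,
        Set.mem_insert_iff, not_or, mem_coe] at hcd ⊢
      refine ⟨⟨hcd.1.1, fun hcd_eq => ?_, hcd.1.2⟩, hcd.2.1.2, hcd.2.2.2⟩
      rw [← hcd_eq, Sym2.mem_iff] at hp
      exact hp.elim (fun hpc => hcd.2.1.1 hpc.symm) fun hpd => hcd.2.2.1 hpd.symm
    obtain ⟨z, hzK, hzx, hzy⟩ : ∃ z, z ∉ K ∧ z ≠ x ∧ z ≠ y := by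
      by_contra! hK
      have hcard : #(insert x K) ≤ #K + 1 := card_insert_le _ _
      refine (vConn_le_card G (S := insert x K) (.inl fun c hc d hd => ?_)).not_gt (by omega)
      simp only [coe_insert, Set.mem_compl_iff, Set.mem_insert_iff, not_or, mem_coe] at hc hd
      rw [hK c hc.2 hc.1, hK d hd.2 hd.1]
    have to_z : ∀ c, c ∉ K → H.Reachable c z := fun c hc =>
      if hcx : c = x then avoiding y (by simp) c z hc hzK (hcx ▸ hxy) hzy
      else avoiding x (by simp) c z hc hzK hcx hzx
    exact (to_z a ha).trans (to_z b hb).symm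

end Connectivity

section MMStar

variable [DecidableEq V] {H : SimpleGraph V} {F1 F2 : Finset V}

lemma mmDistinguishable_comm : mmDistinguishable H F1 F2 ↔ mmDistinguishable H F2 F1 := by
  simp only [mmDistinguishable, union_comm F1 F2, union_comm (F1 \ F2)]
  exact or_congr_right or_comm

lemma notMem_union_of_adj_of_not_mmDistinguishable (hind : ¬ mmDistinguishable H F1 F2)
    {a b w : V} (ha : a ∉ F1 ∪ F2) (hw : w ∉ F1 ∪ F2) (haw : H.Adj a w) (hab : H.Adj a b)
    (hb : b ∉ F1 ∩ F2) : b ∉ F1 ∪ F2 := by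
  refine fun hb' => hind (.inl ⟨a, w, b, ha, hw, ?_, hab, haw⟩)
  simp only [mem_union, mem_inter, mem_sdiff] at hb hb' ⊢
  tauto

lemma notMem_union_of_reachable_of_not_mmDistinguishable (hind : ¬ mmDistinguishable H F1 F2)
    {u w v : V} (hu : u ∉ F1 ∪ F2) (hw : w ∉ F1 ∪ F2) (huw : H.Adj u w)
    (huv : (H.induce (↑(F1 ∩ F2) : Set V)ᶜ).spanningCoe.Reachable u v) : v ∉ F1 ∪ F2 := by
  rw [reachable_iff_reflTransGen] at huv
  suffices v ∉ F1 ∪ F2 ∧ ∃ w ∉ F1 ∪ F2, H.Adj v w from this.1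
  induction huv with
  | refl => exact ⟨hu, w, hw, huw⟩
  | tail _ hbc ih =>
    obtain ⟨hb, w', hw', hbw'⟩ := ih
    rw [spanningCoe_induce_adj] at hbc
    exact ⟨notMem_union_of_adj_of_not_mmDistinguishable hind hb hw' hbw' hbc.1 hbc.2.2,
      _, hb, hbc.1.symm⟩

lemma card_filter_adj_sdiff_le_one {u : V} [DecidablePred (H.Adj u)]
    (hind : ¬ mmDistinguishable H F1 F2) (hu : u ∉ F1 ∪ F2) : #{v ∈ F1 \ F2 | H.Adj u v} ≤ 1 := by
  refine card_le_one.2 fun a ha b hb => by_contra fun hab => hind (.inr (.inl ?_))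
  rw [mem_filter] at ha hb
  exact ⟨a, b, u, ha.1, hb.1, hab, hu, ha.2.symm, hb.2.symm⟩

end MMStar

lemma card_filter_mk_mem_le [Fintype V] (Fe : Finset (Sym2 V)) (u : V)
    [DecidablePred (s(u, ·) ∈ Fe)] : #{v | s(u, v) ∈ Fe} ≤ #Fe :=
  card_le_card_of_injOn (s(u, ·)) (fun v hv => by simpa using hv)
    fun _ _ _ _ h => Sym2.congr_right.1 h

lemma degree_le_of_not_mmDistinguishable [Fintype V] [DecidableEq V] (G : SimpleGraph V)
    [DecidableRel G.Adj] {Fe : Finset (Sym2 V)} {F1 F2 : Finset V}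
    (hind : ¬ mmDistinguishable (G.deleteEdges ↑Fe) F1 F2) {u : V} (hu : u ∉ F1 ∪ F2)
    (hout : ∀ w ∉ F1 ∪ F2, ¬ (G.deleteEdges ↑Fe).Adj u w) :
    G.degree u ≤ #(F1 ∩ F2) + 2 + #Fe := by
  classical
  set Gd := G.deleteEdges ↑Fe
  have hsub : G.neighborFinset u ⊆ F1 ∩ F2 ∪ {v ∈ F1 \ F2 | Gd.Adj u v} ∪
      {v ∈ F2 \ F1 | Gd.Adj u v} ∪ ({v | s(u, v) ∈ Fe} : Finset V) := by
    intro v hv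
    rw [mem_neighborFinset] at hv
    by_cases hvFe : s(u, v) ∈ Fe
    · simp [hvFe]
    have huv : Gd.Adj u v := (deleteEdges_adj ..).2 ⟨hv, by simpa using hvFe⟩
    have hv' : v ∈ F1 ∪ F2 := not_not.1 fun hv' => hout v hv' huv
    simp only [mem_union, mem_inter, mem_sdiff, mem_filter] at hv' ⊢
    tauto
  have h12 := card_filter_adj_sdiff_le_one hind hu
  have h21 := card_filter_adj_sdiff_le_one (mmDistinguishable_comm.not.1 hind)
    (union_comm F1 F2 ▸ hu)
  calc G.degree u = #(G.neighborFinset u) := (card_neighborFinset_eq_degree ..).symm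
    _ ≤ _ := card_le_card hsub
    _ ≤ #(F1 ∩ F2) + 1 + 1 + #Fe := by
      grw [card_union_le, card_union_le, card_union_le, h12, h21, card_filter_mk_mem_le]

theorem mm_intersection_bound_general [Fintype V] [DecidableEq V] (G : SimpleGraph V)
    [DecidableRel G.Adj] (t h : ℕ) (ht3 : 3 ≤ t) (ht : t ≤ vConn G)
    (hh : h ≤ (t - 1) / 2)
    (Fe : Finset (Sym2 V)) (hFe : ↑Fe ⊆ G.edgeSet) (hFec : Fe.card ≤ h)
    (F1 F2 : Finset V) (hne : F1 ≠ F2)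
    (hind : ¬ mmDistinguishable (G.deleteEdges ↑Fe) F1 F2)
    (hcap : (F1 ∩ F2).card ≤ t - h - 1) :
    ∀ u : V, u ∉ F1 ∪ F2 →
      G.degree u - h - 2 ≤ (F1 ∩ F2).card ∧ t - h - 2 ≤ G.degree u - h - 2 := by
  intro u hu
  have hdeg : t ≤ G.degree u := ht.trans (vConn_le_degree G u)
  obtain ⟨z, hz⟩ := symmDiff_nonempty.2 hne
  rw [mem_symmDiff] at hz
  have hzK : z ∉ F1 ∩ F2 := by rw [mem_inter]; tauto
  have hzU : z ∈ F1 ∪ F2 := by rw [mem_union]; tauto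
  have hreach := reachable_induce_compl_deleteEdges G (F1 ∩ F2) hFe (by omega)
    (fun huK => hu (inter_subset_union huK)) hzK
  have hout : ∀ w ∉ F1 ∪ F2, ¬ (G.deleteEdges ↑Fe).Adj u w := fun w hw huw =>
    notMem_union_of_reachable_of_not_mmDistinguishable hind hu hw huw hreach hzU
  have hdeg_le := degree_le_of_not_mmDistinguishable G hind hu hout
  omega

/-- In a $t$-connected graph, for MM*-indistinguishable $F_1 ≠ F_2$ in $G - F_e$ with
small intersection, every vertex outside $F_1 ∪ F_2$ forces
$|F_1 ∩ F_2| ≥ \deg_G(u) - h - 2 ≥ t - h - 2$. -/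
theorem mm_intersection_bound [Fintype V] [DecidableEq V] (G : SimpleGraph V)
    [DecidableRel G.Adj] (t h : ℕ) (ht3 : 3 ≤ t) (ht : t ≤ vConn G)
    (hh : h ≤ (t - 1) / 2) (hV : 2 * (t - h) + 3 ≤ Fintype.card V)
    (Fe : Finset (Sym2 V)) (hFe : ↑Fe ⊆ G.edgeSet) (hFec : Fe.card ≤ h)
    (F1 F2 : Finset V) (hne : F1 ≠ F2)
    (hind : ¬ mmDistinguishable (G.deleteEdges ↑Fe) F1 F2)
    (hcap : (F1 ∩ F2).card ≤ t - h - 1) (hV2 : F1 ∪ F2 ≠ Finset.univ) :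
    ∀ u : V, u ∉ F1 ∪ F2 →
      G.degree u - h - 2 ≤ (F1 ∩ F2).card ∧ t - h - 2 ≤ G.degree u - h - 2 :=
  mm_intersection_bound_general G t h ht3 ht hh Fe hFe hFec F1 F2 hne hind hcap
end

section
/- Let G be a t-regular t-connected simple graph with t > 2 and |V(G)| ≥ 2t + 3. Then G is t-diagnosable under the MM* model. -/
open SimpleGraph Finset

variable {V : Type*}

private lemma walk_cross_s17 {V' : Type*} {G' : SimpleGraph V'} (P : V' → Prop) :
    ∀ {a b : V'}, G'.Walk a b → P a → ¬ P b →
      ∃ x y : V', G'.Adj x y ∧ P x ∧ ¬ P y := by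
  intro a b p
  induction p with
  | nil => exact fun h h' => absurd h h'
  | @cons u v w h' p ih =>
    intro ha hb
    by_cases hv : P v
    · exact ih hv hb
    · exact ⟨u, v, h', ha, hv⟩

private lemma sum_nbr_inter [Fintype V] [DecidableEq V] (G : SimpleGraph V)
    [DecidableRel G.Adj] (W S : Finset V) :
    ∑ w ∈ W, (G.neighborFinset w ∩ S).card ≤ ∑ s ∈ S, G.degree s := by
  have h1 : ∀ w : V, G.neighborFinset w ∩ S = S.filter (fun s => G.Adj w s) := by
    intro w; ext s
    simp [SimpleGraph.mem_neighborFinset, and_comm]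
  calc ∑ w ∈ W, (G.neighborFinset w ∩ S).card
      = ∑ w ∈ W, ∑ s ∈ S, if G.Adj w s then 1 else 0 :=
        Finset.sum_congr rfl fun w _ => by rw [h1 w, Finset.card_filter]
    _ = ∑ s ∈ S, ∑ w ∈ W, if G.Adj w s then 1 else 0 := Finset.sum_comm
    _ ≤ ∑ s ∈ S, G.degree s := by
        refine Finset.sum_le_sum fun s _ => ?_
        rw [← Finset.card_filter]
        have hsub : W.filter (fun w => G.Adj w s) ⊆ G.neighborFinset s := by
          intro w hw
          rw [SimpleGraph.mem_neighborFinset]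
          exact (Finset.mem_filter.mp hw).2.symm
        exact (Finset.card_le_card hsub).trans_eq (G.card_neighborFinset_eq_degree s)

/-- Chang et al.: a $t$-regular $t$-connected graph with $t > 2$ and $|V| ≥ 2t+3$ is
$t$-diagnosable under the MM* model. -/
theorem mm_t_diagnosable [Fintype V] [DecidableEq V] (G : SimpleGraph V)
    [DecidableRel G.Adj] (t : ℕ) (ht : 2 < t) (hreg : ∀ v : V, G.degree v = t)
    (hconn : t ≤ vConn G) (hV : 2 * t + 3 ≤ Fintype.card V) :
    ∀ F1 F2 : Finset V, F1 ≠ F2 → F1.card ≤ t → F2.card ≤ t →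
      mmDistinguishable G F1 F2 := by
  intro F1 F2 hne hF1 hF2
  by_contra hnd
  set S : Finset V := F1 ∩ F2 with hSdef
  set A : Finset V := F1 \ F2 with hAdef
  set B : Finset V := F2 \ F1 with hBdef
  set U : Finset V := F1 ∪ F2 with hUdef
  set W : Finset V := Finset.univ \ U with hWdef
  have hmemW : ∀ x : V, x ∈ W ↔ x ∉ F1 ∪ F2 := by
    intro x; simp [hWdef, hUdef]
  have hmemAB : ∀ x : V, x ∈ A ∪ B ↔ x ∈ (F1 \ F2) ∪ (F2 \ F1) := by
    intro x; simp [hAdef, hBdef]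
  -- A ∪ B nonempty
  have hABne : (A ∪ B).Nonempty := by
    rw [Finset.nonempty_iff_ne_empty]
    intro h
    rw [Finset.union_eq_empty] at h
    exact hne (Finset.Subset.antisymm (Finset.sdiff_eq_empty_iff_subset.mp h.1)
      (Finset.sdiff_eq_empty_iff_subset.mp h.2))
  -- S has fewer than t vertices
  have hsc : S.card < t := by
    obtain ⟨v, hv⟩ := hABne
    rcases Finset.mem_union.mp hv with hv | hv
    · rw [hAdef, Finset.mem_sdiff] at hv
      have hss : S ⊂ F1 := by
        refine ⟨Finset.inter_subset_left, fun hsub => ?_⟩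
        exact hv.2 (Finset.mem_inter.mp (hsub hv.1)).2
      exact lt_of_lt_of_le (Finset.card_lt_card hss) hF1
    · rw [hBdef, Finset.mem_sdiff] at hv
      have hss : S ⊂ F2 := by
        refine ⟨Finset.inter_subset_right, fun hsub => ?_⟩
        exact hv.2 (Finset.mem_inter.mp (hsub hv.1)).1
      exact lt_of_lt_of_le (Finset.card_lt_card hss) hF2
  -- removing S leaves the graph connected
  have hconn' : (G.induce ((↑S : Set V)ᶜ)).Connected := by
    by_contra h
    have h2 : vConn G ≤ S.card := Nat.sInf_le ⟨S, rfl, Or.inr h⟩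
    omega
  have hT : ∀ x : V, x ∉ S → x ∈ ((↑S : Set V)ᶜ) := by
    intro x h; simpa using h
  have hUeq : U = S ∪ (A ∪ B) := by
    ext x
    simp only [hUdef, hSdef, hAdef, hBdef, Finset.mem_union, Finset.mem_inter,
      Finset.mem_sdiff]
    tauto
  have hdisjS : Disjoint S (A ∪ B) := by
    rw [Finset.disjoint_left]
    intro x hxS hxAB
    rw [hSdef, Finset.mem_inter] at hxS
    rcases Finset.mem_union.mp hxAB with h | h
    · exact (Finset.mem_sdiff.mp h).2 hxS.2
    · exact (Finset.mem_sdiff.mp h).2 hxS.1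
  -- every vertex of W has a neighbor in A ∪ B
  have hY : ∀ w ∈ W, ∃ v ∈ A ∪ B, G.Adj w v := by
    intro w0 hw0
    by_contra hno
    push_neg at hno
    obtain ⟨v0, hv0⟩ := hABne
    have hw0S : w0 ∉ S := by
      intro h
      exact ((hmemW w0).mp hw0) (by
        rw [hSdef, Finset.mem_inter] at h
        exact Finset.mem_union_left _ h.1)
    have hv0S : v0 ∉ S := Finset.disjoint_right.mp hdisjS hv0
    have hv0U : v0 ∈ U := by rw [hUeq]; exact Finset.mem_union_right _ hv0
    obtain ⟨p⟩ := hconn'.preconnected ⟨w0, hT _ hw0S⟩ ⟨v0, hT _ hv0S⟩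
    have hv0nW : ¬ ((v0 ∈ W) ∧ ∀ v ∈ A ∪ B, ¬ G.Adj v0 v) := by
      intro h
      exact ((hmemW v0).mp h.1) (by rwa [hUdef] at hv0U)
    obtain ⟨x, y, hadj, hPx, hPy⟩ :=
      walk_cross_s17 (fun z : ((↑S : Set V)ᶜ : Set V) =>
        (z : V) ∈ W ∧ ∀ v ∈ A ∪ B, ¬ G.Adj (z : V) v) p ⟨hw0, hno⟩ hv0nW
    have hadj' : G.Adj (x : V) (y : V) := hadj
    obtain ⟨hxW, hxno⟩ := hPx
    by_cases hyU : (y : V) ∈ U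
    · have hyAB : (y : V) ∈ A ∪ B := by
        rw [hUeq, Finset.mem_union] at hyU
        rcases hyU with h | h
        · exact absurd h (by
            have h2 := y.2
            simp only [Set.mem_compl_iff, Finset.mem_coe] at h2
            exact h2)
        · exact h
      exact hxno _ hyAB hadj'
    · have hyW : (y : V) ∈ W := by
        rw [hmemW, ← hUdef]; exact hyU
      have hyex : ¬ ∀ v ∈ A ∪ B, ¬ G.Adj (y : V) v := fun hall => hPy ⟨hyW, hall⟩
      push_neg at hyex
      obtain ⟨v, hvAB, hyv⟩ := hyex
      exact hnd (Or.inl ⟨y, x, v, (hmemW _).mp hyW, (hmemW _).mp hxW,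
        (hmemAB v).mp hvAB, hyv, hadj'.symm⟩)
  -- all neighbors of W-vertices lie in U
  have hNU : ∀ w ∈ W, G.neighborFinset w ⊆ U := by
    intro w hw x hx
    by_contra hxU
    have hxW : x ∈ W := by rw [hmemW, ← hUdef]; exact hxU
    obtain ⟨v, hv, hwv⟩ := hY w hw
    exact hnd (Or.inl ⟨w, x, v, (hmemW _).mp hw, (hmemW _).mp hxW,
      (hmemAB v).mp hv, hwv, (SimpleGraph.mem_neighborFinset _ _ _).mp hx⟩)
  -- at most one neighbor in A, at most one in B
  have hA1 : ∀ w ∈ W, (G.neighborFinset w ∩ A).card ≤ 1 := by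
    intro w hw
    refine Finset.card_le_one.mpr fun a ha b hb => ?_
    by_contra hab
    rw [Finset.mem_inter] at ha hb
    refine hnd (Or.inr (Or.inl ⟨a, b, w, ?_, ?_, hab, (hmemW _).mp hw, ?_, ?_⟩))
    · rw [hAdef] at ha; exact ha.2
    · rw [hAdef] at hb; exact hb.2
    · exact ((SimpleGraph.mem_neighborFinset _ _ _).mp ha.1).symm
    · exact ((SimpleGraph.mem_neighborFinset _ _ _).mp hb.1).symm
  have hB1 : ∀ w ∈ W, (G.neighborFinset w ∩ B).card ≤ 1 := by
    intro w hw
    refine Finset.card_le_one.mpr fun a ha b hb => ?_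
    by_contra hab
    rw [Finset.mem_inter] at ha hb
    refine hnd (Or.inr (Or.inr ⟨a, b, w, ?_, ?_, hab, (hmemW _).mp hw, ?_, ?_⟩))
    · rw [hBdef] at ha; exact ha.2
    · rw [hBdef] at hb; exact hb.2
    · exact ((SimpleGraph.mem_neighborFinset _ _ _).mp ha.1).symm
    · exact ((SimpleGraph.mem_neighborFinset _ _ _).mp hb.1).symm
  -- pointwise degree decomposition
  have hpt : ∀ w ∈ W,
      (G.neighborFinset w ∩ S).card + (G.neighborFinset w ∩ (A ∪ B)).card = t := by
    intro w hw
    have hsub := hNU w hw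
    have hN : G.neighborFinset w
        = (G.neighborFinset w ∩ S) ∪ (G.neighborFinset w ∩ (A ∪ B)) := by
      rw [← Finset.inter_union_distrib_left, ← hUeq, Finset.inter_eq_left.mpr hsub]
    have hdisj : Disjoint (G.neighborFinset w ∩ S) (G.neighborFinset w ∩ (A ∪ B)) :=
      Disjoint.mono Finset.inter_subset_right Finset.inter_subset_right hdisjS
    rw [← Finset.card_union_of_disjoint hdisj, ← hN,
      G.card_neighborFinset_eq_degree, hreg]
  have hpt2 : ∀ w ∈ W, (G.neighborFinset w ∩ (A ∪ B)).card ≤ 2 := by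
    intro w hw
    rw [Finset.inter_union_distrib_left]
    calc ((G.neighborFinset w ∩ A) ∪ (G.neighborFinset w ∩ B)).card
        ≤ (G.neighborFinset w ∩ A).card + (G.neighborFinset w ∩ B).card :=
          Finset.card_union_le _ _
      _ ≤ 2 := by have := hA1 w hw; have := hB1 w hw; omega
  -- cardinal bookkeeping
  have e1 : W.card + U.card = Fintype.card V := by
    rw [hWdef, Finset.card_sdiff_add_card_eq_card (Finset.subset_univ U),
      Finset.card_univ]
  have e2 : U.card + S.card = F1.card + F2.card :=
    Finset.card_union_add_card_inter F1 F2
  have e2a : A.card + S.card = F1.card := Finset.card_sdiff_add_card_inter F1 F2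
  have e2b : B.card + S.card = F2.card := by
    rw [hBdef, hSdef, Finset.inter_comm]
    exact Finset.card_sdiff_add_card_inter F2 F1
  have eU : U.card = S.card + (A ∪ B).card := by
    rw [hUeq]; exact Finset.card_union_of_disjoint hdisjS
  have eAB : (A ∪ B).card ≤ A.card + B.card := Finset.card_union_le _ _
  have hWne : W.Nonempty := Finset.card_pos.mp (by omega)
  obtain ⟨w0, hw0⟩ := hWne
  have e3 : t ≤ S.card + 2 := by
    have h1 := hpt w0 hw0
    have h2 := hpt2 w0 hw0
    have h3 : (G.neighborFinset w0 ∩ S).card ≤ S.card :=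
      Finset.card_le_card Finset.inter_subset_right
    omega
  -- sum bounds
  have hsumS : ∑ w ∈ W, (G.neighborFinset w ∩ S).card ≤ t * S.card := by
    calc ∑ w ∈ W, (G.neighborFinset w ∩ S).card ≤ ∑ s ∈ S, G.degree s :=
        sum_nbr_inter G W S
      _ = t * S.card := by simp [hreg, mul_comm]
  have hsumAB : ∑ w ∈ W, (G.neighborFinset w ∩ (A ∪ B)).card ≤ t * (A ∪ B).card := by
    calc ∑ w ∈ W, (G.neighborFinset w ∩ (A ∪ B)).card ≤ ∑ s ∈ A ∪ B, G.degree s :=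
        sum_nbr_inter G W (A ∪ B)
      _ = t * (A ∪ B).card := by simp [hreg, mul_comm]
  have hsum_t : (∑ w ∈ W, (G.neighborFinset w ∩ S).card)
      + (∑ w ∈ W, (G.neighborFinset w ∩ (A ∪ B)).card) = t * W.card := by
    rw [← Finset.sum_add_distrib]
    calc ∑ w ∈ W, ((G.neighborFinset w ∩ S).card
          + (G.neighborFinset w ∩ (A ∪ B)).card)
        = ∑ _w ∈ W, t := Finset.sum_congr rfl hpt
      _ = t * W.card := by rw [Finset.sum_const, smul_eq_mul, mul_comm]
  have e4 : W.card ≤ S.card + (A ∪ B).card := by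
    have h : t * W.card ≤ t * (S.card + (A ∪ B).card) := by
      rw [Nat.mul_add]; omega
    exact Nat.le_of_mul_le_mul_left h (by omega)
  have hscval : S.card = t - 2 := by omega
  have hsumS_lb : W.card * (t - 2) ≤ ∑ w ∈ W, (G.neighborFinset w ∩ S).card := by
    have := Finset.card_nsmul_le_sum W (fun w => (G.neighborFinset w ∩ S).card) (t - 2)
      (fun w hw => by
        show t - 2 ≤ (G.neighborFinset w ∩ S).card
        have h1 := hpt w hw; have h2 := hpt2 w hw; omega)
    simpa using this
  have hwc : W.card ≤ t := by
    have h : W.card * (t - 2) ≤ t * S.card := hsumS_lb.trans hsumS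
    rw [hscval] at h
    have h2 : W.card * (t - 2) ≤ t * (t - 2) := h
    exact Nat.le_of_mul_le_mul_right h2 (by omega)
  omega
end
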